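/- arXiv:2308.03138 — 3 statements merged into one kernel-verified Lean document; each statement's English description precedes it below -/
import Mathlib

section
/- Let d ∈ ℕ, α > 0, let γ_u > 0 for each subset u ⊆ {1,…,d}, let λ ∈ (0, α), and let p be a prime. Then (1/p^d) · Σ_{z ∈ {0,…,p−1}^d} Σ_{h ∈ ℤ^d∖{0}, h·z ≡ 0 (mod p)} r_{α,γ}(h)^{−1/λ} ≤ (2/p)·μ_λ. -/
open scoped BigOperators Classical ENNReal
open MeasureTheory

noncomputable def rfun (d : ℕ) (α : ℝ) (γ : Finset (Fin d) → ℝ) (h : Fin d → ℤ) : ℝ :=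
  (γ (Finset.univ.filter fun j => h j ≠ 0))⁻¹ *
    ∏ j ∈ Finset.univ.filter fun j => h j ≠ 0, |(h j : ℝ)| ^ α

/-- `μ_λ = Σ_{h ∈ ℤ^d \ {0}} r_{α,γ}(h)^(-1/λ)`. -/
noncomputable def mu (d : ℕ) (α : ℝ) (γ : Finset (Fin d) → ℝ) (lam : ℝ) : ℝ :=
  ∑' h : {h : Fin d → ℤ // h ≠ 0}, rfun d α γ h.1 ^ (-1 / lam)

private lemma rfun_pos {d : ℕ} {α : ℝ} {γ : Finset (Fin d) → ℝ} (hγ : ∀ u, 0 < γ u)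
    (h : Fin d → ℤ) : 0 < rfun d α γ h := by
  unfold rfun
  apply mul_pos (inv_pos.2 (hγ _))
  apply Finset.prod_pos
  intro j hj
  rw [Finset.mem_filter] at hj
  exact Real.rpow_pos_of_pos (abs_pos.2 (Int.cast_ne_zero.2 hj.2)) _

private lemma rfun_rpow_eq {d : ℕ} {α lam : ℝ} {γ : Finset (Fin d) → ℝ}
    (hγ : ∀ u, 0 < γ u) (h : Fin d → ℤ) :
    rfun d α γ h ^ (-1 / lam)
      = γ (Finset.univ.filter fun j => h j ≠ 0) ^ (1 / lam)
        * ∏ j ∈ Finset.univ.filter fun j => h j ≠ 0, |(h j : ℝ)| ^ (-(α / lam)) := by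
  unfold rfun
  have hnn : ∀ j ∈ Finset.univ.filter fun j : Fin d => h j ≠ 0, (0:ℝ) ≤ |(h j : ℝ)| ^ α :=
    fun j _ => Real.rpow_nonneg (abs_nonneg _) _
  rw [Real.mul_rpow (inv_nonneg.2 (hγ _).le) (Finset.prod_nonneg hnn)]
  congr 1
  · rw [neg_div, Real.rpow_neg (inv_nonneg.2 (hγ _).le), Real.inv_rpow (hγ _).le, inv_inv]
  · rw [← Real.finset_prod_rpow _ _ hnn]
    refine Finset.prod_congr rfl fun j hj => ?_
    rw [← Real.rpow_mul (abs_nonneg _)]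
    congr 1
    ring

private lemma summable_g {b : ℝ} (hb : 1 < b) :
    Summable fun n : ℤ => (if n = 0 then (1:ℝ) else |(n : ℝ)| ^ (-b)) := by
  have h1 := Real.summable_abs_int_rpow hb
  have h2 : Summable fun n : ℤ => (if n = 0 then (1:ℝ) else 0) := by
    apply summable_of_ne_finset_zero (s := ({0} : Finset ℤ))
    intro n hn
    simp only [Finset.mem_singleton] at hn
    simp [hn]
  refine (h1.add h2).congr fun n => ?_
  by_cases hn : n = 0
  · simp [hn, Real.zero_rpow (show -b ≠ 0 by intro hc; rw [neg_eq_zero] at hc; linarith)]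
  · simp [hn]

private lemma summable_pi_prod {g : ℤ → ℝ} (hg0 : ∀ n, 0 ≤ g n) (hg : Summable g)
    (d : ℕ) : Summable fun h : Fin d → ℤ => ∏ j, g (h j) := by
  induction d with
  | zero =>
    refine (hasSum_single (f := fun h : Fin 0 → ℤ => ∏ j, g (h j)) (0 : Fin 0 → ℤ) ?_).summable
    intro b hb
    exact absurd (funext fun j => j.elim0 : b = 0) hb
  | succ e ih =>
    have hg0' : (0 : ℤ → ℝ) ≤ g := hg0
    have hih0 : (0 : (Fin e → ℤ) → ℝ) ≤ fun h : Fin e → ℤ => ∏ j, g (h j) :=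
      fun h => Finset.prod_nonneg fun j _ => hg0 _
    have hprod : Summable fun x : ℤ × (Fin e → ℤ) => g x.1 * ∏ j, g (x.2 j) :=
      Summable.mul_of_nonneg (f := g) (g := fun h : Fin e → ℤ => ∏ j, g (h j))
        hg ih hg0' hih0
    have h2 : Summable ((fun h : Fin (e+1) → ℤ => ∏ j, g (h j)) ∘ (Fin.consEquiv fun _ : Fin (e+1) => ℤ)) := by
      refine hprod.congr fun x => ?_
      simp [Function.comp, Fin.prod_univ_succ]
    exact ((Fin.consEquiv fun _ : Fin (e+1) => ℤ).summable_iff).mp h2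

private lemma summable_F {d : ℕ} {α lam : ℝ} {γ : Finset (Fin d) → ℝ}
    (hγ : ∀ u, 0 < γ u) (hlam0 : 0 < lam) (hlama : lam < α) :
    Summable fun h : Fin d → ℤ => rfun d α γ h ^ (-1 / lam) := by
  have hb : 1 < α / lam := (one_lt_div hlam0).2 hlama
  set g : ℤ → ℝ := fun n => if n = 0 then 1 else |(n : ℝ)| ^ (-(α/lam)) with hgdef
  have hg0 : ∀ n, 0 ≤ g n := by
    intro n
    by_cases hn : n = 0 <;> simp [hgdef, hn, Real.rpow_nonneg (abs_nonneg _)]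
  have hG := summable_pi_prod hg0 (summable_g hb) d
  set C : ℝ := ∑ u : Finset (Fin d), γ u ^ (1/lam) with hC
  apply Summable.of_nonneg_of_le (fun h => Real.rpow_nonneg (rfun_pos hγ h).le _) _
    (hG.mul_left C)
  intro h
  rw [rfun_rpow_eq hγ h]
  have heq : (∏ j ∈ Finset.univ.filter fun j : Fin d => h j ≠ 0, |(h j : ℝ)| ^ (-(α/lam)))
      = ∏ j, g (h j) := by
    rw [Finset.prod_filter]
    refine Finset.prod_congr rfl fun j _ => ?_
    by_cases hj : h j = 0 <;> simp [hgdef, hj]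
  rw [heq]
  apply mul_le_mul_of_nonneg_right _ (Finset.prod_nonneg fun j _ => hg0 _)
  exact Finset.single_le_sum (f := fun u => γ u ^ (1/lam))
    (fun u _ => Real.rpow_nonneg (hγ u).le _) (Finset.mem_univ _)

private lemma tsum_subtype_ite {ι : Type*} (P : ι → Prop) [DecidablePred P] (F : ι → ℝ) :
    (∑' x : {h : ι // P h}, F x.1) = ∑' h : ι, if P h then F h else 0 := by
  have h1 : (∑' x : {h : ι // P h}, F x.1)
      = ∑' x : {h : ι // P h}, (if P x.1 then F x.1 else 0) :=
    tsum_congr fun x => (if_pos x.2).symm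
  rw [h1]
  refine tsum_subtype_eq_of_support_subset
    (f := fun h => if P h then F h else 0) (s := {h : ι | P h}) ?_
  intro h hh
  simp only [Function.mem_support] at hh
  by_contra hc
  simp only [Set.mem_setOf_eq] at hc
  exact hh (if_neg hc)

private lemma count_le {d p : ℕ} (hp : p.Prime) (h : Fin d → ℤ) (j0 : Fin d)
    (hj0 : ¬ (p : ℤ) ∣ h j0) :
    (Finset.univ.filter fun z : Fin d → Fin p =>
      (p : ℤ) ∣ ∑ j, h j * ((z j : ℕ) : ℤ)).card ≤ p ^ (d - 1) := by
  classical
  have hcard : Fintype.card ({j : Fin d // j ≠ j0} → Fin p) = p ^ (d - 1) := by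
    rw [Fintype.card_fun, Fintype.card_fin]
    congr 1
    rw [Fintype.card_subtype_compl, Fintype.card_subtype_eq, Fintype.card_fin]
  rw [← hcard, ← Finset.card_univ]
  apply Finset.card_le_card_of_injOn
    (fun z : Fin d → Fin p => fun j : {j : Fin d // j ≠ j0} => z j.1)
    (fun z _ => Finset.mem_univ _)
  intro z hz z' hz' hzz
  simp only [Finset.mem_coe, Finset.mem_filter] at hz hz'
  have hjs : ∀ j : Fin d, j ≠ j0 → z j = z' j := fun j hj => congrFun hzz ⟨j, hj⟩
  have hsum : (∑ j, h j * ((z j : ℕ) : ℤ)) - (∑ j, h j * ((z' j : ℕ) : ℤ))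
      = h j0 * (((z j0 : ℕ) : ℤ) - ((z' j0 : ℕ) : ℤ)) := by
    rw [← Finset.sum_sub_distrib]
    rw [Finset.sum_eq_single j0]
    · rw [mul_sub]
    · intro j _ hj
      rw [hjs j hj, sub_self]
    · intro habs
      exact absurd (Finset.mem_univ j0) habs
  have hdvd : (p : ℤ) ∣ h j0 * (((z j0 : ℕ) : ℤ) - ((z' j0 : ℕ) : ℤ)) := by
    rw [← hsum]
    exact dvd_sub hz.2 hz'.2
  have hdvd2 : (p : ℤ) ∣ (((z j0 : ℕ) : ℤ) - ((z' j0 : ℕ) : ℤ)) := by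
    rcases (Nat.prime_iff_prime_int.1 hp).dvd_mul.1 hdvd with h1 | h1
    · exact absurd h1 hj0
    · exact h1
  have hzeq : z j0 = z' j0 := by
    have h1 : ((z j0 : ℕ) : ℤ) < p := by exact_mod_cast (z j0).2
    have h2 : ((z' j0 : ℕ) : ℤ) < p := by exact_mod_cast (z' j0).2
    have h3 : (0:ℤ) ≤ ((z j0 : ℕ) : ℤ) := Int.natCast_nonneg _
    have h4 : (0:ℤ) ≤ ((z' j0 : ℕ) : ℤ) := Int.natCast_nonneg _
    have h0 : (((z j0 : ℕ) : ℤ) - ((z' j0 : ℕ) : ℤ)) = 0 :=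
      Int.eq_zero_of_abs_lt_dvd hdvd2 (abs_sub_lt_iff.2 ⟨by linarith, by linarith⟩)
    have h5 : ((z j0 : ℕ) : ℤ) = ((z' j0 : ℕ) : ℤ) := sub_eq_zero.1 h0
    exact Fin.ext (by exact_mod_cast h5)
  funext j
  by_cases hj : j = j0
  · rw [hj]; exact hzeq
  · exact hjs j hj

private lemma F_scaling {d : ℕ} {α lam : ℝ} {γ : Finset (Fin d) → ℝ}
    (hγ : ∀ u, 0 < γ u) (hlam0 : 0 < lam) (hlama : lam < α) {p : ℕ} (hp : p.Prime)
    {h : Fin d → ℤ} (h0 : h ≠ 0) (hdvd : ∀ j, (p:ℤ) ∣ h j) :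
    rfun d α γ h ^ (-1 / lam)
      ≤ (p:ℝ)⁻¹ * rfun d α γ (fun j => h j / p) ^ (-1 / lam) := by
  have hb : (1:ℝ) < α / lam := (one_lt_div hlam0).2 hlama
  have hppos : (0:ℝ) < p := by exact_mod_cast hp.pos
  set k : Fin d → ℤ := fun j => h j / p with hk
  have hpk : ∀ j, h j = p * k j := fun j => (Int.mul_ediv_cancel' (hdvd j)).symm
  have hpne : (p:ℤ) ≠ 0 := by exact_mod_cast hp.pos.ne'
  have hsupp : (Finset.univ.filter fun j => k j ≠ 0)
      = (Finset.univ.filter fun j : Fin d => h j ≠ 0) := by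
    apply Finset.filter_congr
    intro j _
    rw [hpk j]
    simp [mul_eq_zero, hpne, hp.ne_zero]
  rw [rfun_rpow_eq hγ h, rfun_rpow_eq hγ k, hsupp]
  set u := Finset.univ.filter fun j : Fin d => h j ≠ 0 with hu
  have hune : u.Nonempty := by
    obtain ⟨j, hj⟩ : ∃ j, h j ≠ 0 := by
      by_contra hcon
      push_neg at hcon
      exact h0 (funext hcon)
    exact ⟨j, Finset.mem_filter.2 ⟨Finset.mem_univ _, hj⟩⟩
  have habs : ∀ j ∈ u, |(h j : ℝ)| ^ (-(α/lam))
      = (p:ℝ) ^ (-(α/lam)) * |(k j : ℝ)| ^ (-(α/lam)) := by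
    intro j _
    rw [hpk j]
    push_cast
    rw [abs_mul, abs_of_nonneg hppos.le, Real.mul_rpow hppos.le (abs_nonneg _)]
  rw [Finset.prod_congr rfl habs, Finset.prod_mul_distrib, Finset.prod_const]
  have hple : ((p:ℝ) ^ (-(α/lam))) ^ u.card ≤ (p:ℝ)⁻¹ := by
    have hp1 : (1:ℝ) ≤ p := by exact_mod_cast hp.one_lt.le
    have h1 : ((p:ℝ) ^ (-(α/lam))) ^ u.card ≤ (p:ℝ) ^ (-(α/lam)) :=
      pow_le_of_le_one (Real.rpow_nonneg hppos.le _)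
        (Real.rpow_le_one_of_one_le_of_nonpos hp1
          (neg_nonpos.2 (div_nonneg (by linarith) hlam0.le)))
        (Finset.card_pos.2 hune).ne'
    refine h1.trans ?_
    have h2 := Real.rpow_le_rpow_of_exponent_le hp1 (show -(α/lam) ≤ -1 by linarith)
    rwa [Real.rpow_neg_one] at h2
  calc γ u ^ (1/lam) * (((p:ℝ) ^ (-(α/lam))) ^ u.card * ∏ j ∈ u, |(k j : ℝ)| ^ (-(α/lam)))
      ≤ γ u ^ (1/lam) * ((p:ℝ)⁻¹ * ∏ j ∈ u, |(k j : ℝ)| ^ (-(α/lam))) := by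
        apply mul_le_mul_of_nonneg_left _ (Real.rpow_nonneg (hγ u).le _)
        exact mul_le_mul_of_nonneg_right hple
          (Finset.prod_nonneg fun j _ => Real.rpow_nonneg (abs_nonneg _) _)
    _ = (p:ℝ)⁻¹ * (γ u ^ (1/lam) * ∏ j ∈ u, |(k j : ℝ)| ^ (-(α/lam))) := by ring

theorem stmt2 (d : ℕ) (α : ℝ) (hα : 0 < α) (γ : Finset (Fin d) → ℝ)
    (hγ : ∀ u, 0 < γ u) (lam : ℝ) (hlam : lam ∈ Set.Ioo 0 α) (p : ℕ) (hp : p.Prime) :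
    (1 / (p : ℝ) ^ d) * ∑ z : Fin d → Fin p,
        ∑' h : {h : Fin d → ℤ // h ≠ 0 ∧ (p : ℤ) ∣ ∑ j, h j * ((z j : ℕ) : ℤ)},
          rfun d α γ h.1 ^ (-1 / lam)
      ≤ 2 / p * mu d α γ lam := by
  classical
  obtain ⟨hlam0, hlama⟩ := hlam
  have hppos : (0:ℝ) < p := by exact_mod_cast hp.pos
  set F : (Fin d → ℤ) → ℝ := fun h => rfun d α γ h ^ (-1 / lam) with hFdef
  have hF0 : ∀ h, 0 ≤ F h := fun h => Real.rpow_nonneg (rfun_pos hγ h).le _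
  have hFs : Summable F := summable_F hγ hlam0 hlama
  have hmu0 : 0 ≤ mu d α γ lam := tsum_nonneg fun x => hF0 x.1
  rcases Nat.eq_zero_or_pos d with hd0 | hd
  · subst hd0
    have hempty : ∀ z : Fin 0 → Fin p,
        (∑' h : {h : Fin 0 → ℤ // h ≠ 0 ∧ (p : ℤ) ∣ ∑ j, h j * ((z j : ℕ) : ℤ)},
          rfun 0 α γ h.1 ^ (-1 / lam)) = 0 := by
      intro z
      haveI : IsEmpty {h : Fin 0 → ℤ // h ≠ 0 ∧ (p : ℤ) ∣ ∑ j, h j * ((z j : ℕ) : ℤ)} :=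
        ⟨fun x => x.2.1 (funext fun j => j.elim0)⟩
      exact tsum_empty
    rw [Finset.sum_congr rfl fun z _ => hempty z, Finset.sum_const, smul_zero, mul_zero]
    exact mul_nonneg (by positivity) hmu0
  -- main case
  have hmu_eq : mu d α γ lam = ∑' h : Fin d → ℤ, (if h ≠ 0 then F h else 0) :=
    tsum_subtype_ite (fun h : Fin d → ℤ => h ≠ 0) F
  have hinner : ∀ z : Fin d → Fin p,
      (∑' h : {h : Fin d → ℤ // h ≠ 0 ∧ (p : ℤ) ∣ ∑ j, h j * ((z j : ℕ) : ℤ)},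
        rfun d α γ h.1 ^ (-1 / lam))
      = ∑' h : Fin d → ℤ,
          (if h ≠ 0 ∧ (p : ℤ) ∣ ∑ j, h j * ((z j : ℕ) : ℤ) then F h else 0) := fun z =>
    tsum_subtype_ite (fun h : Fin d → ℤ => h ≠ 0 ∧ (p : ℤ) ∣ ∑ j, h j * ((z j : ℕ) : ℤ)) F
  have hsum_ind : ∀ z : Fin d → Fin p, Summable fun h : Fin d → ℤ =>
      (if h ≠ 0 ∧ (p : ℤ) ∣ ∑ j, h j * ((z j : ℕ) : ℤ) then F h else 0) := by
    intro z
    apply Summable.of_nonneg_of_le _ _ hFs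
    · intro h; split_ifs with hh; exacts [hF0 h, le_rfl]
    · intro h; split_ifs with hh; exacts [le_rfl, hF0 h]
  set Nc : (Fin d → ℤ) → ℕ := fun h =>
    (Finset.univ.filter fun z : Fin d → Fin p => (p : ℤ) ∣ ∑ j, h j * ((z j : ℕ) : ℤ)).card
    with hNc
  have hcount : ∀ h : Fin d → ℤ,
      (∑ z : Fin d → Fin p,
        if h ≠ 0 ∧ (p : ℤ) ∣ ∑ j, h j * ((z j : ℕ) : ℤ) then F h else 0)
      = (if h ≠ 0 then (Nc h : ℝ) * F h else 0) := by
    intro h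
    by_cases h0 : h = 0
    · simp [h0]
    · rw [if_pos h0]
      have hite : ∀ z : Fin d → Fin p,
          (if h ≠ 0 ∧ (p : ℤ) ∣ ∑ j, h j * ((z j : ℕ) : ℤ) then F h else 0)
          = (if (p : ℤ) ∣ ∑ j, h j * ((z j : ℕ) : ℤ) then F h else 0) := by
        intro z
        by_cases hq : (p : ℤ) ∣ ∑ j, h j * ((z j : ℕ) : ℤ) <;> simp [hq, h0]
      rw [Finset.sum_congr rfl fun z _ => hite z, ← Finset.sum_filter, Finset.sum_const,
        nsmul_eq_mul]
  have hNc_le_pd : ∀ h, (Nc h : ℝ) ≤ (p:ℝ) ^ d := by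
    intro h
    have h1 : Nc h ≤ p ^ d := by
      have h2 := Finset.card_filter_le (Finset.univ : Finset (Fin d → Fin p))
        (fun z => (p : ℤ) ∣ ∑ j, h j * ((z j : ℕ) : ℤ))
      simpa [Finset.card_univ, Fintype.card_fun, Fintype.card_fin] using h2
    exact_mod_cast h1
  have hTs : Summable (fun h : Fin d → ℤ => if h ≠ 0 then (Nc h : ℝ) * F h else 0) := by
    apply Summable.of_nonneg_of_le _ _ (hFs.mul_left ((p:ℝ) ^ d))
    · intro h; split_ifs with hh
      exacts [mul_nonneg (Nat.cast_nonneg _) (hF0 h), le_rfl]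
    · intro h; split_ifs with hh
      · exact mul_le_mul_of_nonneg_right (hNc_le_pd h) (hF0 h)
      · exact mul_nonneg (by positivity) (hF0 h)
  have hs1 : Summable (fun h : Fin d → ℤ => if h ≠ 0 then F h else 0) := by
    apply Summable.of_nonneg_of_le _ _ hFs
    · intro h; split_ifs with hh; exacts [hF0 h, le_rfl]
    · intro h; split_ifs with hh; exacts [le_rfl, hF0 h]
  have hs2 : Summable (fun h : Fin d → ℤ =>
      if h ≠ 0 ∧ (∀ j, (p:ℤ) ∣ h j) then F h else 0) := by
    apply Summable.of_nonneg_of_le _ _ hFs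
    · intro h; split_ifs with hh; exacts [hF0 h, le_rfl]
    · intro h; split_ifs with hh; exacts [le_rfl, hF0 h]
  -- the key pointwise bound
  have hT_le : ∀ h : Fin d → ℤ,
      (if h ≠ 0 then (Nc h : ℝ) * F h else 0)
      ≤ (p:ℝ) ^ (d - 1) * (if h ≠ 0 then F h else 0)
        + (p:ℝ) ^ d * (if h ≠ 0 ∧ (∀ j, (p:ℤ) ∣ h j) then F h else 0) := by
    intro h
    by_cases h0 : h = 0
    · simp [h0]
    · rw [if_pos h0, if_pos h0]
      by_cases hall : ∀ j, (p:ℤ) ∣ h j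
      · rw [if_pos ⟨h0, hall⟩]
        have h1 : (Nc h : ℝ) * F h ≤ (p:ℝ) ^ d * F h :=
          mul_le_mul_of_nonneg_right (hNc_le_pd h) (hF0 h)
        exact h1.trans (le_add_of_nonneg_left
          (mul_nonneg (pow_nonneg hppos.le _) (hF0 h)))
      · push_neg at hall
        obtain ⟨j0, hj0⟩ := hall
        rw [if_neg (fun hc => hj0 (hc.2 j0)), mul_zero, add_zero]
        have h1 : Nc h ≤ p ^ (d - 1) := count_le hp h j0 hj0
        have h2 : (Nc h : ℝ) ≤ (p:ℝ) ^ (d - 1) := by exact_mod_cast h1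
        exact mul_le_mul_of_nonneg_right h2 (hF0 h)
  -- δ bound
  have hδ : (∑' h : Fin d → ℤ, if h ≠ 0 ∧ (∀ j, (p:ℤ) ∣ h j) then F h else 0)
      ≤ (p:ℝ)⁻¹ * mu d α γ lam := by
    rw [← tsum_subtype_ite (fun h : Fin d → ℤ => h ≠ 0 ∧ ∀ j, (p:ℤ) ∣ h j) F]
    have hmu2 : mu d α γ lam = ∑' k : {h : Fin d → ℤ // h ≠ 0}, F k.1 := rfl
    rw [hmu2, ← tsum_mul_left]
    have hknz : ∀ x : {h : Fin d → ℤ // h ≠ 0 ∧ ∀ j, (p:ℤ) ∣ h j},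
        (fun j => x.1 j / p) ≠ (0 : Fin d → ℤ) := by
      intro x hc
      apply x.2.1
      funext j
      have h1 := congrFun hc j
      have h2 : x.1 j = p * (x.1 j / p) := (Int.mul_ediv_cancel' (x.2.2 j)).symm
      rw [h2, h1]
      simp
    refine Summable.tsum_le_tsum_of_inj (fun x => ⟨fun j => x.1 j / p, hknz x⟩) ?_ ?_ ?_
      (hFs.subtype _) ((hFs.subtype _).mul_left _)
    · intro x y hxy
      have h1 := congrArg Subtype.val hxy
      apply Subtype.ext
      funext j
      have h2 := congrFun h1 j
      simp only at h2
      have h3 : x.1 j = p * (x.1 j / p) := (Int.mul_ediv_cancel' (x.2.2 j)).symm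
      have h4 : y.1 j = p * (y.1 j / p) := (Int.mul_ediv_cancel' (y.2.2 j)).symm
      rw [h3, h4, h2]
    · intro c _
      exact mul_nonneg (inv_nonneg.2 hppos.le) (hF0 c.1)
    · intro x
      exact F_scaling hγ hlam0 hlama hp x.2.1 x.2.2
  -- put things together
  have hS : (∑ z : Fin d → Fin p,
      ∑' h : {h : Fin d → ℤ // h ≠ 0 ∧ (p : ℤ) ∣ ∑ j, h j * ((z j : ℕ) : ℤ)},
        rfun d α γ h.1 ^ (-1 / lam))
      = ∑' h : Fin d → ℤ, (if h ≠ 0 then (Nc h : ℝ) * F h else 0) := by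
    rw [Finset.sum_congr rfl fun z _ => hinner z]
    rw [← Summable.tsum_finsetSum fun z _ => hsum_ind z]
    exact tsum_congr hcount
  have hmain : (∑' h : Fin d → ℤ, if h ≠ 0 then (Nc h : ℝ) * F h else 0)
      ≤ (p:ℝ) ^ (d - 1) * mu d α γ lam
        + (p:ℝ) ^ d * (∑' h : Fin d → ℤ, if h ≠ 0 ∧ (∀ j, (p:ℤ) ∣ h j) then F h else 0) := by
    have hle := Summable.tsum_le_tsum hT_le hTs ((hs1.mul_left _).add (hs2.mul_left _))
    rwa [Summable.tsum_add (hs1.mul_left _) (hs2.mul_left _), tsum_mul_left, tsum_mul_left,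
      ← hmu_eq] at hle
  obtain ⟨e, rfl⟩ : ∃ e, d = e + 1 := ⟨d - 1, (Nat.succ_pred_eq_of_pos hd).symm⟩
  have hde : (e + 1) - 1 = e := rfl
  have htot : (∑' h : Fin (e+1) → ℤ, if h ≠ 0 then (Nc h : ℝ) * F h else 0)
      ≤ 2 * ((p:ℝ) ^ e * mu (e+1) α γ lam) := by
    have h1 : (p:ℝ) ^ (e + 1) *
        (∑' h : Fin (e+1) → ℤ, if h ≠ 0 ∧ (∀ j, (p:ℤ) ∣ h j) then F h else 0)
        ≤ (p:ℝ) ^ e * mu (e+1) α γ lam := by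
      have h2 := mul_le_mul_of_nonneg_left hδ (pow_nonneg hppos.le (e+1))
      calc (p:ℝ) ^ (e + 1) *
          (∑' h : Fin (e+1) → ℤ, if h ≠ 0 ∧ (∀ j, (p:ℤ) ∣ h j) then F h else 0)
          ≤ (p:ℝ) ^ (e + 1) * ((p:ℝ)⁻¹ * mu (e+1) α γ lam) := h2
        _ = (p:ℝ) ^ e * mu (e+1) α γ lam := by
            rw [pow_succ]
            field_simp
    calc (∑' h : Fin (e+1) → ℤ, if h ≠ 0 then (Nc h : ℝ) * F h else 0)
        ≤ (p:ℝ) ^ ((e+1) - 1) * mu (e+1) α γ lam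
          + (p:ℝ) ^ (e+1) * (∑' h : Fin (e+1) → ℤ,
            if h ≠ 0 ∧ (∀ j, (p:ℤ) ∣ h j) then F h else 0) := hmain
      _ ≤ (p:ℝ) ^ e * mu (e+1) α γ lam + (p:ℝ) ^ e * mu (e+1) α γ lam := by
          rw [hde]
          exact add_le_add_right h1 _
      _ = 2 * ((p:ℝ) ^ e * mu (e+1) α γ lam) := by ring
  rw [hS]
  calc (1 / (p:ℝ) ^ (e+1)) *
      (∑' h : Fin (e+1) → ℤ, if h ≠ 0 then (Nc h : ℝ) * F h else 0)
      ≤ (1 / (p:ℝ) ^ (e+1)) * (2 * ((p:ℝ) ^ e * mu (e+1) α γ lam)) :=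
        mul_le_mul_of_nonneg_left htot (by positivity)
    _ = 2 / p * mu (e+1) α γ lam := by
        rw [pow_succ]
        field_simp
end

section
/- Let d ∈ ℕ, α > 0, let γ_u > 0 for each subset u ⊆ {1,…,d}, let λ ∈ (0, α), let n ≥ 2 be a natural number, and let p_1, …, p_k be distinct primes in P_n (k ≥ 0). Then Σ_{h ∈ ℤ^d∖{0}} ( Π_{i=1}^{k} 𝟙(h ≡ 0 (mod p_i)) ) · r_{α,γ}(h)^{−1/λ} ≤ (2/n)^k · μ_λ, where 𝟙(h ≡ 0 (mod p)) means every component of h is divisible by p. -/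
open scoped BigOperators Classical ENNReal
open MeasureTheory

/-- `P_n = { p prime : n/2 < p ≤ n }`. -/
def Pset (n : ℕ) : Finset ℕ := (Finset.range (n + 1)).filter fun p => p.Prime ∧ n < 2 * p

noncomputable def wfun (t : ℝ) (z : ℤ) : ℝ := if z = 0 then 1 else |(z : ℝ)| ^ (-t)

lemma wfun_nonneg (t : ℝ) (z : ℤ) : 0 ≤ wfun t z := by
  unfold wfun; split
  · norm_num
  · positivity

lemma wfun_summable {t : ℝ} (ht : 1 < t) : Summable (wfun t) := by
  have h1 : Summable fun z : ℤ => |(z : ℝ)| ^ (-t) := Real.summable_abs_int_rpow ht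
  have h2 : Summable fun z : ℤ => if z = 0 then (1 : ℝ) else 0 :=
    (hasSum_ite_eq (0 : ℤ) (1 : ℝ)).summable
  refine (h1.add h2).congr fun z => ?_
  unfold wfun
  by_cases hz : z = 0
  · simp [hz, Real.zero_rpow (by linarith : -t ≠ 0)]
  · simp [hz]

lemma wfun_prod_summable {t : ℝ} (ht : 1 < t) (d : ℕ) :
    Summable fun h : Fin d → ℤ => ∏ j, wfun t (h j) := by
  induction d with
  | zero => simpa using Summable.of_finite
  | succ d ih =>
    have hs := (wfun_summable ht).mul_of_nonneg ih (fun _ => wfun_nonneg t _)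
      (fun h => Finset.prod_nonneg fun j _ => wfun_nonneg t _)
    rw [← (Fin.consEquiv (fun _ : Fin (d + 1) => ℤ)).summable_iff]
    refine hs.congr fun p => ?_
    simp only [Function.comp, Fin.consEquiv_apply]
    rw [Fin.prod_univ_succ]
    simp

lemma F_eq {d : ℕ} {α lam : ℝ} {γ : Finset (Fin d) → ℝ} (hγ : ∀ u, 0 < γ u)
    (hlam : 0 < lam) (h : Fin d → ℤ) :
    rfun d α γ h ^ (-1 / lam)
      = γ (Finset.univ.filter fun j => h j ≠ 0) ^ (1 / lam) * ∏ j, wfun (α / lam) (h j) := by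
  set u := Finset.univ.filter fun j => h j ≠ 0 with hu
  have habs : ∀ j ∈ u, (0:ℝ) ≤ |(h j : ℝ)| ^ α := fun j _ => by positivity
  rw [rfun, Real.mul_rpow (inv_nonneg.mpr (hγ u).le) (Finset.prod_nonneg habs)]
  congr 1
  · rw [Real.inv_rpow (hγ u).le, ← Real.rpow_neg (hγ u).le, neg_div, neg_neg]
  · rw [← Real.finset_prod_rpow u _ habs (-1 / lam), hu, Finset.prod_filter]
    refine Finset.prod_congr rfl fun j _ => ?_
    by_cases hj : h j = 0
    · simp [hj, wfun]
    · rw [if_pos hj, wfun, if_neg hj, ← Real.rpow_mul (abs_nonneg _)]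
      congr 1
      field_simp

lemma F_nonneg {d : ℕ} {α lam : ℝ} {γ : Finset (Fin d) → ℝ} (hγ : ∀ u, 0 < γ u)
    (h : Fin d → ℤ) : 0 ≤ rfun d α γ h ^ (-1 / lam) := by
  apply Real.rpow_nonneg
  unfold rfun
  have : ∀ j ∈ Finset.univ.filter fun j => h j ≠ 0, (0:ℝ) ≤ |(h j : ℝ)| ^ α :=
    fun j _ => by positivity
  exact mul_nonneg (inv_nonneg.mpr (hγ _).le) (Finset.prod_nonneg this)

lemma F_summable {d : ℕ} {α lam : ℝ} {γ : Finset (Fin d) → ℝ} (hγ : ∀ u, 0 < γ u)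
    (hα : 0 < α) (hlam : 0 < lam) (hlt : lam < α) :
    Summable fun h : Fin d → ℤ => rfun d α γ h ^ (-1 / lam) := by
  have ht : 1 < α / lam := (one_lt_div hlam).mpr hlt
  set C : ℝ := ∑ u : Finset (Fin d), γ u ^ (1 / lam) with hC
  have hCle : ∀ u : Finset (Fin d), γ u ^ (1 / lam) ≤ C := fun u =>
    Finset.single_le_sum (f := fun u => γ u ^ (1 / lam))
      (fun v _ => Real.rpow_nonneg (hγ v).le _) (Finset.mem_univ u)
  refine Summable.of_nonneg_of_le (fun h => F_nonneg hγ h) (fun h => ?_)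
    (((wfun_prod_summable ht d).mul_left C))
  rw [F_eq hγ hlam h]
  apply mul_le_mul_of_nonneg_right (hCle _)
  exact Finset.prod_nonneg fun j _ => wfun_nonneg _ _

lemma dvd_prod_iff' {k : ℕ} (ps : Fin k → ℕ) (hp : ∀ i, (ps i).Prime)
    (hinj : Function.Injective ps) (z : ℤ) :
    (∀ i, (ps i : ℤ) ∣ z) ↔ ((∏ i, ps i : ℕ) : ℤ) ∣ z := by
  constructor
  · intro hz
    have hcop : Pairwise (Function.onFun IsCoprime fun i => (ps i : ℤ)) := by
      intro i j hij
      rw [Function.onFun, Nat.isCoprime_iff_coprime]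
      exact (Nat.coprime_primes (hp i) (hp j)).mpr fun h => hij (hinj h)
    have := Fintype.prod_dvd_of_coprime hcop hz
    simpa using this
  · intro hz i
    refine dvd_trans ?_ hz
    have : ps i ∣ ∏ i, ps i := Finset.dvd_prod_of_mem _ (Finset.mem_univ i)
    exact_mod_cast Int.natCast_dvd_natCast.mpr this

lemma wfun_mul_le {t : ℝ} (ht : 0 ≤ t) {m : ℕ} (hm : 1 ≤ m) (z : ℤ) :
    wfun t ((m : ℤ) * z) ≤ wfun t z := by
  by_cases hz : z = 0
  · simp [hz]
  · have hmz : (m : ℤ) * z ≠ 0 :=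
      mul_ne_zero (by exact_mod_cast Nat.one_le_iff_ne_zero.mp hm) hz
    rw [wfun, if_neg hmz, wfun, if_neg hz]
    push_cast
    rw [abs_mul, Real.mul_rpow (abs_nonneg _) (abs_nonneg _)]
    have h1 : |(m : ℝ)| ^ (-t) ≤ 1 := by
      rw [abs_of_nonneg (by positivity)]
      exact Real.rpow_le_one_of_one_le_of_nonpos (by exact_mod_cast hm) (by linarith)
    nlinarith [Real.rpow_nonneg (abs_nonneg ((z:ℝ))) (-t),
      Real.rpow_nonneg (abs_nonneg ((m:ℝ))) (-t)]

lemma wfun_mul_le' {t c : ℝ} (ht : 0 ≤ t) {m : ℕ} (hm : 1 ≤ m)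
    (hmc : (m : ℝ) ^ (-t) ≤ c) {z : ℤ} (hz : z ≠ 0) :
    wfun t ((m : ℤ) * z) ≤ c * wfun t z := by
  have hmz : (m : ℤ) * z ≠ 0 :=
    mul_ne_zero (by exact_mod_cast Nat.one_le_iff_ne_zero.mp hm) hz
  rw [wfun, if_neg hmz, wfun, if_neg hz]
  push_cast
  rw [abs_mul, Real.mul_rpow (abs_nonneg _) (abs_nonneg _),
    abs_of_nonneg (by positivity : (0:ℝ) ≤ (m:ℝ))]
  exact mul_le_mul_of_nonneg_right hmc (Real.rpow_nonneg (abs_nonneg _) _)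

lemma prod_wfun_mul_le {d : ℕ} {t c : ℝ} (ht : 0 ≤ t) {m : ℕ} (hm : 1 ≤ m)
    (hc : 0 ≤ c) (hmc : (m : ℝ) ^ (-t) ≤ c) {g : Fin d → ℤ} (hg : g ≠ 0) :
    ∏ j, wfun t ((m : ℤ) * g j) ≤ c * ∏ j, wfun t (g j) := by
  obtain ⟨j0, hj0⟩ := Function.ne_iff.mp hg
  have hj0' : g j0 ≠ 0 := hj0
  rw [← Finset.mul_prod_erase Finset.univ _ (Finset.mem_univ j0),
    ← Finset.mul_prod_erase Finset.univ (fun j => wfun t (g j)) (Finset.mem_univ j0),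
    ← mul_assoc]
  refine mul_le_mul (wfun_mul_le' ht hm hmc hj0')
    (Finset.prod_le_prod (fun j _ => wfun_nonneg t _) fun j _ => wfun_mul_le ht hm _)
    (Finset.prod_nonneg fun j _ => wfun_nonneg t _)
    (mul_nonneg hc (wfun_nonneg t _))

theorem stmt12 (d : ℕ) (α : ℝ) (hα : 0 < α) (γ : Finset (Fin d) → ℝ)
    (hγ : ∀ u, 0 < γ u) (lam : ℝ) (hlam : lam ∈ Set.Ioo 0 α) (n : ℕ) (hn : 2 ≤ n)
    (k : ℕ) (ps : Fin k → ℕ) (hinj : Function.Injective ps) (hmem : ∀ i, ps i ∈ Pset n) :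
    (∑' h : {h : Fin d → ℤ // h ≠ 0},
        (∏ i, if ∀ j, (ps i : ℤ) ∣ h.1 j then (1 : ℝ) else 0) * rfun d α γ h.1 ^ (-1 / lam))
      ≤ (2 / n) ^ k * mu d α γ lam := by
  classical
  obtain ⟨hlam0, hlt⟩ := hlam
  set t : ℝ := α / lam with htdef
  have ht1 : 1 < t := (one_lt_div hlam0).mpr hlt
  have hp : ∀ i, (ps i).Prime := fun i => ((Finset.mem_filter.mp (hmem i)).2).1
  have hpn : ∀ i, n < 2 * ps i := fun i => ((Finset.mem_filter.mp (hmem i)).2).2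
  set m : ℕ := ∏ i, ps i with hm
  have hm1 : 1 ≤ m := Nat.one_le_iff_ne_zero.mpr (by
    rw [hm, Finset.prod_ne_zero_iff]
    exact fun i _ => (hp i).pos.ne')
  have hmz : (m : ℤ) ≠ 0 := by exact_mod_cast Nat.one_le_iff_ne_zero.mp hm1
  have hn0 : (0 : ℝ) < n := by positivity
  have hhalf : ((n : ℝ) / 2) ^ k ≤ (m : ℝ) := by
    rw [hm]
    push_cast
    calc ((n : ℝ) / 2) ^ k = ∏ _i : Fin k, (n : ℝ) / 2 := by
          rw [Finset.prod_const, Finset.card_univ, Fintype.card_fin]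
      _ ≤ ∏ i, (ps i : ℝ) := by
          refine Finset.prod_le_prod (fun i _ => by positivity) fun i _ => ?_
          have := hpn i
          have : (n : ℝ) < 2 * (ps i : ℝ) := by exact_mod_cast this
          linarith
  set c : ℝ := (2 / (n : ℝ)) ^ k with hc
  have hc0 : 0 < c := by positivity
  have hmc : (m : ℝ) ^ (-t) ≤ c := by
    have hm1' : (1 : ℝ) ≤ (m : ℝ) := by exact_mod_cast hm1
    calc (m : ℝ) ^ (-t) ≤ (m : ℝ) ^ (-1 : ℝ) :=
          Real.rpow_le_rpow_of_exponent_le hm1' (by linarith)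
      _ = ((m : ℝ))⁻¹ := Real.rpow_neg_one _
      _ ≤ (((n : ℝ) / 2) ^ k)⁻¹ := by
          apply inv_anti₀ (by positivity) hhalf
      _ = c := by rw [hc, ← inv_pow, inv_div]
  -- summability
  have hFs : Summable fun h : Fin d → ℤ => rfun d α γ h ^ (-1 / lam) :=
    F_summable hγ hα hlam0 hlt
  have hFsub : Summable fun h : {h : Fin d → ℤ // h ≠ 0} => rfun d α γ h.1 ^ (-1 / lam) :=
    hFs.comp_injective Subtype.val_injective
  -- the injection
  set S := {h : Fin d → ℤ // h ≠ 0}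
  have hφmem : ∀ g : S, (fun j => (m : ℤ) * g.1 j) ≠ 0 := by
    intro g h0
    apply g.2
    funext j
    have := congrFun h0 j
    simp only [Pi.zero_apply] at this
    exact (mul_eq_zero.mp this).resolve_left hmz
  set φ : S → S := fun g => ⟨fun j => (m : ℤ) * g.1 j, hφmem g⟩ with hφ
  have hφinj : Function.Injective φ := by
    intro g1 g2 h12
    apply Subtype.ext
    funext j
    have := congrFun (congrArg Subtype.val h12) j
    exact mul_left_cancel₀ hmz this
  set B : S → ℝ := fun h =>
    (if ∀ j, (m : ℤ) ∣ h.1 j then (1 : ℝ) else 0) * rfun d α γ h.1 ^ (-1 / lam) with hB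
  have hLHS : (∑' h : S,
      (∏ i, if ∀ j, (ps i : ℤ) ∣ h.1 j then (1 : ℝ) else 0) * rfun d α γ h.1 ^ (-1 / lam))
      = ∑' h : S, B h := by
    refine tsum_congr fun h => ?_
    rw [hB]
    congr 1
    rw [Fintype.prod_boole]
    congr 1
    rw [forall_comm]
    exact propext (forall_congr' fun j => dvd_prod_iff' ps hp hinj (h.1 j))
  have hsupp : Function.support B ⊆ Set.range φ := by
    intro h hh
    rw [Function.mem_support, hB] at hh
    have hdvd : ∀ j, (m : ℤ) ∣ h.1 j := by
      by_contra hcon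
      simp [hcon] at hh
    have hgne : (fun j => h.1 j / (m : ℤ)) ≠ 0 := by
      intro h0
      apply h.2
      funext j
      have h1 := congrFun h0 j
      simp only [Pi.zero_apply] at h1
      have := Int.ediv_mul_cancel (hdvd j)
      rw [h1] at this
      simpa using this.symm
    refine ⟨⟨fun j => h.1 j / (m : ℤ), hgne⟩, ?_⟩
    apply Subtype.ext
    funext j
    exact Int.mul_ediv_cancel' (hdvd j)
  have hstep : ∀ g : S, B (φ g) ≤ c * rfun d α γ g.1 ^ (-1 / lam) := by
    intro g
    have hdvd : ∀ j, (m : ℤ) ∣ (φ g).1 j := fun j => Dvd.intro _ rfl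
    rw [hB]
    simp only [if_pos hdvd, one_mul]
    have hsupp_eq : (Finset.univ.filter fun j => (φ g).1 j ≠ 0)
        = Finset.univ.filter fun j => g.1 j ≠ 0 := by
      apply Finset.filter_congr
      intro j _
      simp [hφ, hmz]
      exact fun _ => by omega
    rw [F_eq hγ hlam0, F_eq hγ hlam0, hsupp_eq]
    have : ∏ j, wfun (α / lam) ((φ g).1 j) ≤ c * ∏ j, wfun (α / lam) (g.1 j) :=
      prod_wfun_mul_le (by linarith) hm1 hc0.le hmc g.2
    calc γ (Finset.univ.filter fun j => g.1 j ≠ 0) ^ (1 / lam) * ∏ j, wfun (α / lam) ((φ g).1 j)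
        ≤ γ (Finset.univ.filter fun j => g.1 j ≠ 0) ^ (1 / lam)
            * (c * ∏ j, wfun (α / lam) (g.1 j)) :=
          mul_le_mul_of_nonneg_left this (Real.rpow_nonneg (hγ _).le _)
      _ = c * (γ (Finset.univ.filter fun j => g.1 j ≠ 0) ^ (1 / lam)
            * ∏ j, wfun (α / lam) (g.1 j)) := by ring
  have hBnn : ∀ g : S, 0 ≤ B (φ g) := by
    intro g
    rw [hB]
    exact mul_nonneg (by positivity) (F_nonneg hγ _)
  have hRsum : Summable fun g : S => c * rfun d α γ g.1 ^ (-1 / lam) := hFsub.mul_left c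
  have hLsum : Summable fun g : S => B (φ g) :=
    Summable.of_nonneg_of_le hBnn hstep hRsum
  rw [hLHS, ← hφinj.tsum_eq hsupp]
  calc (∑' g : S, B (φ g)) ≤ ∑' g : S, c * rfun d α γ g.1 ^ (-1 / lam) :=
        Summable.tsum_le_tsum hstep hLsum hRsum
    _ = c * mu d α γ lam := by rw [tsum_mul_left]; rfl
end

section
/- Let d ∈ ℕ, α ≥ 0, let γ_u > 0 for each subset u ⊆ {1,…,d}, let n ≥ 2 be a natural number, and let C₂ > 0 be a constant such that |P_n| ≤ C₂·n/ln(n). Let z ∈ ℤ^d be arbitrary and let f_n(x) = Σ_{q ∈ P_n} ( r_{α,γ}(q·e₁) · √|P_n| )^{−1} · e^{2πi q x₁} with e₁ = (1,0,…,0) ∈ ℤ^d. Then (1/|P_n|) · Σ_{p ∈ P_n} ∫_{[0,1)^d} | Q_{d,p,z,Δ}(f_n) |² dΔ ≥ γ_{{1}}² · ln(n) / ( C₂ · n^{2α+1} ); consequently the root mean square error of the randomly shifted random-prime lattice rule applied to f_n is at least γ_{{1}} · √(ln(n)) / ( √C₂ · n^{α+1/2} ). -/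
open scoped BigOperators Classical ENNReal
open MeasureTheory

/-- The shifted rank-1 lattice rule `Q_{d,m,z,Δ}(f)`. -/
noncomputable def Q (d m : ℕ) (z : Fin d → ℤ) (Δ : Fin d → ℝ) (f : (Fin d → ℝ) → ℂ) : ℂ :=
  (m : ℂ)⁻¹ * ∑ k ∈ Finset.range m, f fun j => Int.fract (((z j * k : ℤ) : ℝ) / m + Δ j)

/-- The half-open unit box `[0,1)^d`. -/
def unitBox (d : ℕ) : Set (Fin d → ℝ) := Set.univ.pi fun _ => Set.Ico (0 : ℝ) 1

section Aux

lemma box_map (d : ℕ) (i : Fin d) :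
    Measure.map (Function.eval i) ((volume : Measure (Fin d → ℝ)).restrict (unitBox d))
      = (volume : Measure ℝ).restrict (Set.Ico 0 1) := by
  ext s hs
  rw [Measure.map_apply (measurable_pi_apply i) hs, Measure.restrict_apply hs,
    Measure.restrict_apply (hs.preimage (measurable_pi_apply i))]
  have hset : Function.eval i ⁻¹' s ∩ unitBox d
      = Set.univ.pi (Function.update (fun _ : Fin d => Set.Ico (0:ℝ) 1) i (s ∩ Set.Ico 0 1)) := by
    ext x
    simp only [Set.mem_inter_iff, Set.mem_preimage, Set.mem_pi, Set.mem_univ, true_implies,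
      unitBox, Function.eval]
    constructor
    · rintro ⟨h1, h2⟩ j
      rcases eq_or_ne j i with rfl | hj
      · simpa using ⟨h1, h2 j⟩
      · simpa [Function.update_of_ne hj] using h2 j
    · intro h
      have hi := h i
      simp only [Function.update_self, Set.mem_inter_iff] at hi
      refine ⟨hi.1, fun j => ?_⟩
      rcases eq_or_ne j i with rfl | hj
      · exact hi.2
      · simpa [Function.update_of_ne hj] using h j
  rw [hset, volume_pi_pi]
  have : (fun j => (volume : Measure ℝ)
        (Function.update (fun _ : Fin d => Set.Ico (0:ℝ) 1) i (s ∩ Set.Ico 0 1) j))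
      = Function.update (fun _ : Fin d => (volume : Measure ℝ) (Set.Ico (0:ℝ) 1)) i
          (volume (s ∩ Set.Ico 0 1)) := by
    ext j
    rcases eq_or_ne j i with rfl | hj
    · simp
    · simp [Function.update_of_ne hj]
  rw [this, Finset.prod_update_of_mem (Finset.mem_univ i)]
  simp [Real.volume_Ico]

lemma box_to_line (d : ℕ) (i : Fin d) (g : ℝ → ℝ) (hg : Continuous g) :
    ∫ Δ in unitBox d, g (Δ i) = ∫ t in Set.Ico (0:ℝ) 1, g t := by
  rw [← box_map d i, integral_map (measurable_pi_apply i).aemeasurable hg.aestronglyMeasurable]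

lemma cont_int (g : ℝ → ℂ) (hg : Continuous g) : IntegrableOn g (Set.Ico (0:ℝ) 1) volume :=
  (hg.continuousOn.integrableOn_compact isCompact_Icc).mono_set Set.Ico_subset_Icc_self

lemma two_pi_I_ne (m : ℤ) (hm : m ≠ 0) : (2 * (Real.pi:ℂ) * Complex.I * m) ≠ 0 := by
  simp only [ne_eq, mul_eq_zero, Complex.I_ne_zero, Complex.ofReal_eq_zero, Real.pi_ne_zero,
    or_false, false_or, Int.cast_eq_zero, OfNat.ofNat_ne_zero]
  tauto

lemma int_exp (m : ℤ) :
    ∫ t in Set.Ico (0:ℝ) 1, Complex.exp (2 * (Real.pi:ℂ) * Complex.I * m * t)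
      = if m = 0 then 1 else 0 := by
  rw [MeasureTheory.integral_Ico_eq_integral_Ioo, ← MeasureTheory.integral_Ioc_eq_integral_Ioo,
    ← intervalIntegral.integral_of_le (by norm_num : (0:ℝ) ≤ 1)]
  rcases eq_or_ne m 0 with rfl | hm
  · simp
  · rw [if_neg hm, integral_exp_mul_complex (two_pi_I_ne m hm)]
    have h1 : (2 * (Real.pi:ℂ) * Complex.I * m) * (1:ℝ) = m * (2 * Real.pi * Complex.I) := by
      push_cast; ring
    have h0 : (2 * (Real.pi:ℂ) * Complex.I * m) * (0:ℝ) = 0 := by push_cast; ring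
    rw [h1, h0, Complex.exp_int_mul_two_pi_mul_I, Complex.exp_zero, sub_self, zero_div]

lemma line_int (P : Finset ℕ) (b : ℕ → ℂ) :
    ∫ t in Set.Ico (0:ℝ) 1,
      ‖∑ q ∈ P, b q * Complex.exp (2*(Real.pi:ℂ)*Complex.I*(q:ℂ)*(t:ℂ))‖ ^ 2
      = ∑ q ∈ P, Complex.normSq (b q) := by
  set H : ℝ → ℂ := fun t => ∑ q ∈ P, b q * Complex.exp (2*(Real.pi:ℂ)*Complex.I*(q:ℂ)*(t:ℂ))
    with hH
  have hHc : Continuous H := by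
    apply continuous_finset_sum
    intro q _
    exact continuous_const.mul (Complex.continuous_exp.comp (by continuity))
  have habs : ∀ t : ℝ, ‖H t‖ ^ 2 = (H t * (starRingEnd ℂ) (H t)).re := by
    intro t
    rw [Complex.mul_conj, Complex.sq_norm]
    simp
  have hprod : ∀ t : ℝ, H t * (starRingEnd ℂ) (H t)
      = ∑ q ∈ P, ∑ q' ∈ P, (b q * (starRingEnd ℂ) (b q'))
          * Complex.exp (2*(Real.pi:ℂ)*Complex.I*(((((q:ℤ) - (q':ℤ) : ℤ)):ℂ))*(t:ℂ)) := by
    intro t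
    rw [hH, map_sum, Finset.sum_mul_sum]
    refine Finset.sum_congr rfl fun q _ => Finset.sum_congr rfl fun q' _ => ?_
    rw [map_mul, ← Complex.exp_conj]
    have hc : (starRingEnd ℂ) (2*(Real.pi:ℂ)*Complex.I*(q':ℂ)*(t:ℂ))
        = -(2*(Real.pi:ℂ)*Complex.I*(q':ℂ)*(t:ℂ)) := by
      simp only [map_mul, Complex.conj_I, Complex.conj_ofReal, map_ofNat, map_natCast]
      ring
    rw [hc, mul_mul_mul_comm, ← Complex.exp_add]
    congr 1
    push_cast; ring
  calc ∫ t in Set.Ico (0:ℝ) 1, ‖H t‖ ^ 2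
      = ∫ t in Set.Ico (0:ℝ) 1, (H t * (starRingEnd ℂ) (H t)).re :=
        integral_congr_ae (Filter.Eventually.of_forall fun t => habs t)
    _ = (∫ t in Set.Ico (0:ℝ) 1, H t * (starRingEnd ℂ) (H t)).re := by
        rw [← RCLike.re_eq_complex_re, ← integral_re]
        exact cont_int _ (hHc.mul (RCLike.continuous_conj.comp hHc))
    _ = (∑ q ∈ P, ∑ q' ∈ P, (b q * (starRingEnd ℂ) (b q'))
          * (if ((((q:ℤ) - (q':ℤ) : ℤ))) = 0 then (1:ℂ) else 0)).re := by
        congr 1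
        rw [integral_congr_ae (Filter.Eventually.of_forall hprod), integral_finset_sum]
        · refine Finset.sum_congr rfl fun q _ => ?_
          rw [integral_finset_sum]
          · refine Finset.sum_congr rfl fun q' _ => ?_
            rw [MeasureTheory.integral_const_mul, int_exp]
          · intro q' _
            exact (cont_int _ (continuous_const.mul
              (Complex.continuous_exp.comp (by continuity))))
        · intro q _
          apply MeasureTheory.integrable_finset_sum
          intro q' _
          exact (cont_int _ (continuous_const.mul
            (Complex.continuous_exp.comp (by continuity))))
    _ = ∑ q ∈ P, Complex.normSq (b q) := by
        have h1 : ∀ q ∈ P, (∑ q' ∈ P, (b q * (starRingEnd ℂ) (b q'))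
            * (if ((((q:ℤ) - (q':ℤ) : ℤ))) = 0 then (1:ℂ) else 0))
            = (Complex.normSq (b q) : ℂ) := by
          intro q hq
          have h2 : ∀ q' ∈ P, (b q * (starRingEnd ℂ) (b q'))
              * (if ((((q:ℤ) - (q':ℤ) : ℤ))) = 0 then (1:ℂ) else 0)
              = if q' = q then b q * (starRingEnd ℂ) (b q') else 0 := by
            intro q' _
            rcases eq_or_ne q' q with rfl | hne
            · simp
            · rw [if_neg (by omega), if_neg hne, mul_zero]
          rw [Finset.sum_congr rfl h2, Finset.sum_ite_eq' P q, if_pos hq, Complex.mul_conj]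
        rw [Finset.sum_congr rfl h1]
        simp

lemma exp_fract (q : ℕ) (x : ℝ) :
    Complex.exp (2*(Real.pi:ℂ)*Complex.I*(q:ℂ)*((Int.fract x : ℝ):ℂ))
      = Complex.exp (2*(Real.pi:ℂ)*Complex.I*(q:ℂ)*(x:ℂ)) := by
  have h : (2*(Real.pi:ℂ)*Complex.I*(q:ℂ)*((Int.fract x : ℝ):ℂ))
      = 2*(Real.pi:ℂ)*Complex.I*(q:ℂ)*(x:ℂ) - ((q * ⌊x⌋ : ℤ):ℂ) * (2*(Real.pi:ℂ)*Complex.I) := by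
    rw [Int.fract]; push_cast; ring
  rw [h, Complex.exp_sub, Complex.exp_int_mul_two_pi_mul_I, div_one]

lemma exp_split (q : ℕ) (u v : ℝ) :
    Complex.exp (2*(Real.pi:ℂ)*Complex.I*(q:ℂ)*((u+v : ℝ):ℂ))
      = Complex.exp (2*(Real.pi:ℂ)*Complex.I*(q:ℂ)*(u:ℂ))
        * Complex.exp (2*(Real.pi:ℂ)*Complex.I*(q:ℂ)*(v:ℂ)) := by
  rw [← Complex.exp_add]; congr 1; push_cast; ring

lemma Qform (d : ℕ) (hd : 0 < d) (P : Finset ℕ) (c : ℕ → ℂ) (p : ℕ) (z : Fin d → ℤ)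
    (f : (Fin d → ℝ) → ℂ)
    (hf : ∀ x, f x = ∑ q ∈ P, c q * Complex.exp (2*(Real.pi:ℂ)*Complex.I*(q:ℂ)*(x ⟨0,hd⟩ : ℂ)))
    (Δ : Fin d → ℝ) :
    Q d p z Δ f = ∑ q ∈ P,
      (c q * ((p:ℂ)⁻¹ * ∑ k ∈ Finset.range p,
          Complex.exp (2*(Real.pi:ℂ)*Complex.I*(q:ℂ)*((((z ⟨0,hd⟩ * k : ℤ) : ℝ) / p : ℝ):ℂ))))
        * Complex.exp (2*(Real.pi:ℂ)*Complex.I*(q:ℂ)*((Δ ⟨0,hd⟩ : ℝ):ℂ)) := by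
  simp only [Q, hf, Finset.mul_sum, exp_fract, exp_split, Finset.sum_mul]
  rw [Finset.sum_comm]
  exact Finset.sum_congr rfl fun k _ => Finset.sum_congr rfl fun q _ => by ring

lemma charsum (p : ℕ) (hp : 0 < p) (m : ℤ) :
    (p:ℂ)⁻¹ * ∑ k ∈ Finset.range p,
      Complex.exp (2*(Real.pi:ℂ)*Complex.I*(p:ℂ)*((((m * k : ℤ) : ℝ) / p : ℝ):ℂ)) = 1 := by
  have hp0 : (p:ℂ) ≠ 0 := Nat.cast_ne_zero.2 hp.ne'
  have h1 : ∀ k ∈ Finset.range p,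
      Complex.exp (2*(Real.pi:ℂ)*Complex.I*(p:ℂ)*((((m * k : ℤ) : ℝ) / p : ℝ):ℂ)) = 1 := by
    intro k _
    have harg : 2*(Real.pi:ℂ)*Complex.I*(p:ℂ)*((((m * k : ℤ) : ℝ) / p : ℝ):ℂ)
        = ((m * k : ℤ):ℂ) * (2*(Real.pi:ℂ)*Complex.I) := by
      push_cast
      field_simp
    rw [harg, Complex.exp_int_mul_two_pi_mul_I]
  rw [Finset.sum_congr rfl h1, Finset.sum_const, Finset.card_range, nsmul_eq_mul, mul_one,
    inv_mul_cancel₀ hp0]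

lemma Pset_nonempty {n : ℕ} (hn : 2 ≤ n) : (Pset n).Nonempty := by
  obtain ⟨p, hp, h1, h2⟩ := Nat.exists_prime_lt_and_le_two_mul (n / 2) (by omega)
  refine ⟨p, ?_⟩
  simp only [Pset, Finset.mem_filter, Finset.mem_range]
  exact ⟨by omega, hp, by omega⟩

end Aux

set_option maxHeartbeats 2000000 in
theorem stmt19 (d : ℕ) (hd : 0 < d) (α : ℝ) (hα : 0 ≤ α) (γ : Finset (Fin d) → ℝ)
    (hγ : ∀ u, 0 < γ u) (n : ℕ) (hn : 2 ≤ n) (C2 : ℝ) (hC2 : 0 < C2)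
    (hPhigh : ((Pset n).card : ℝ) ≤ C2 * n / Real.log n)
    (z : Fin d → ℤ) (f : (Fin d → ℝ) → ℂ)
    (hf : ∀ x, f x = ∑ q ∈ Pset n,
      (((rfun d α γ (fun j => if j = ⟨0, hd⟩ then (q : ℤ) else 0) *
          Real.sqrt ((Pset n).card) : ℝ) : ℂ))⁻¹ *
        Complex.exp (2 * (Real.pi : ℂ) * Complex.I * (q : ℂ) * (x ⟨0, hd⟩ : ℂ))) :
    (γ {⟨0, hd⟩} ^ 2 * Real.log n / (C2 * (n : ℝ) ^ (2 * α + 1))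
      ≤ (1 / ((Pset n).card : ℝ)) *
          ∑ p ∈ Pset n, ∫ Δ in unitBox d, ‖Q d p z Δ f‖ ^ 2) ∧
    (γ {⟨0, hd⟩} * Real.sqrt (Real.log n) / (Real.sqrt C2 * (n : ℝ) ^ (α + 1 / 2))
      ≤ Real.sqrt ((1 / ((Pset n).card : ℝ)) *
          ∑ p ∈ Pset n, ∫ Δ in unitBox d, ‖Q d p z Δ f‖ ^ 2)) := by
  classical
  set i0 : Fin d := ⟨0, hd⟩ with hi0
  set c : ℕ → ℂ := fun q =>
    (((rfun d α γ (fun j => if j = i0 then (q : ℤ) else 0) *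
        Real.sqrt ((Pset n).card) : ℝ) : ℂ))⁻¹ with hc
  set Nc : ℝ := ((Pset n).card : ℝ) with hNc
  have hNE : (Pset n).Nonempty := Pset_nonempty hn
  have hNpos : 0 < Nc := by
    rw [hNc]; exact_mod_cast Finset.card_pos.2 hNE
  have hnpos : (0:ℝ) < n := by positivity
  have hn1 : (1:ℝ) < n := by exact_mod_cast hn.trans_lt' one_lt_two
  have hlg : 0 < Real.log n := Real.log_pos hn1
  have hγpos := hγ {i0}
  -- value of rfun
  have hrfun : ∀ q : ℕ, q ≠ 0 →
      rfun d α γ (fun j => if j = i0 then (q : ℤ) else 0) = (γ {i0})⁻¹ * (q:ℝ) ^ α := by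
    intro q hq
    have hfilt : (Finset.univ.filter fun j : Fin d =>
        (if j = i0 then (q:ℤ) else 0) ≠ 0) = {i0} := by
      ext j
      rcases eq_or_ne j i0 with rfl | hj
      · simp [Nat.cast_ne_zero.2 hq, hq]
      · simp [hj]
    rw [rfun, hfilt, Finset.prod_singleton, if_pos rfl]
    norm_num
  -- normSq of c
  have hcval : ∀ q : ℕ, q ≠ 0 →
      Complex.normSq (c q) = (γ {i0})^2 * (((q:ℝ) ^ α)^2)⁻¹ * Nc⁻¹ := by
    intro q hq
    have hqpos : (0:ℝ) < (q:ℝ)^α := Real.rpow_pos_of_pos (by exact_mod_cast Nat.pos_of_ne_zero hq) α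
    rw [hc]
    simp only
    rw [← Complex.ofReal_inv, Complex.normSq_ofReal, hrfun q hq]
    have hss : Real.sqrt Nc * Real.sqrt Nc = Nc := Real.mul_self_sqrt (Nat.cast_nonneg _)
    rw [← mul_inv]
    have h3 : (γ {i0})⁻¹ * (q:ℝ)^α * Real.sqrt Nc * ((γ {i0})⁻¹ * (q:ℝ)^α * Real.sqrt Nc)
        = ((γ {i0})^2)⁻¹ * ((q:ℝ)^α)^2 * Nc := by
      conv_rhs => rw [← hss]
      ring
    rw [h3, mul_inv, mul_inv, inv_inv]
  -- main per-p bound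
  have hmain : ∀ p ∈ Pset n,
      (γ {i0})^2 * (((n:ℝ) ^ α)^2)⁻¹ * Nc⁻¹
        ≤ ∫ Δ in unitBox d, ‖Q d p z Δ f‖ ^ 2 := by
    intro p hp
    have hpmem := hp
    simp only [Pset, Finset.mem_filter, Finset.mem_range] at hpmem
    obtain ⟨hplt, hpprime, hp2⟩ := hpmem
    have hppos : 0 < p := hpprime.pos
    set b : ℕ → ℂ := fun q => c q * ((p:ℂ)⁻¹ * ∑ k ∈ Finset.range p,
        Complex.exp (2*(Real.pi:ℂ)*Complex.I*(q:ℂ)*((((z i0 * k : ℤ) : ℝ) / p : ℝ):ℂ))) with hb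
    have hQb : ∀ Δ : Fin d → ℝ, Q d p z Δ f
        = ∑ q ∈ Pset n, b q * Complex.exp (2*(Real.pi:ℂ)*Complex.I*(q:ℂ)*((Δ i0 : ℝ):ℂ)) :=
      Qform d hd (Pset n) c p z f hf
    have hHcont : Continuous fun t : ℝ => ‖
        (∑ q ∈ Pset n, b q * Complex.exp (2*(Real.pi:ℂ)*Complex.I*(q:ℂ)*(t:ℂ)))‖ ^ 2 := by
      apply Continuous.pow
      apply continuous_norm.comp
      apply continuous_finset_sum
      intro q _
      exact continuous_const.mul (Complex.continuous_exp.comp (by continuity))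
    have hint : ∫ Δ in unitBox d, ‖Q d p z Δ f‖ ^ 2
        = ∑ q ∈ Pset n, Complex.normSq (b q) := by
      calc ∫ Δ in unitBox d, ‖Q d p z Δ f‖ ^ 2
          = ∫ Δ in unitBox d, (fun t : ℝ => ‖
              (∑ q ∈ Pset n, b q * Complex.exp (2*(Real.pi:ℂ)*Complex.I*(q:ℂ)*(t:ℂ)))‖ ^ 2)
              (Δ i0) := by
            refine integral_congr_ae (Filter.Eventually.of_forall fun Δ => ?_)
            simp only [hQb Δ]
        _ = ∫ t in Set.Ico (0:ℝ) 1, ‖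
              (∑ q ∈ Pset n, b q * Complex.exp (2*(Real.pi:ℂ)*Complex.I*(q:ℂ)*(t:ℂ)))‖ ^ 2 :=
            box_to_line d i0 _ hHcont
        _ = ∑ q ∈ Pset n, Complex.normSq (b q) := line_int (Pset n) b
    have hbp : b p = c p := by
      rw [hb]
      simp only
      rw [charsum p hppos (z i0), mul_one]
    have hlow : Complex.normSq (b p) ≤ ∑ q ∈ Pset n, Complex.normSq (b q) :=
      Finset.single_le_sum (fun q _ => Complex.normSq_nonneg (b q)) hp
    have hpc : Complex.normSq (b p) = (γ {i0})^2 * (((p:ℝ) ^ α)^2)⁻¹ * Nc⁻¹ := by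
      rw [hbp, hcval p hppos.ne']
    rw [hint]
    refine le_trans ?_ hlow
    rw [hpc]
    have hpa : (p:ℝ)^α ≤ (n:ℝ)^α :=
      Real.rpow_le_rpow (by positivity) (by exact_mod_cast by omega : (p:ℝ) ≤ n) hα
    have hppow : (0:ℝ) < (p:ℝ)^α := Real.rpow_pos_of_pos (by exact_mod_cast hppos) α
    have hinv : (((n:ℝ)^α)^2)⁻¹ ≤ (((p:ℝ)^α)^2)⁻¹ :=
      inv_anti₀ (by positivity) (pow_le_pow_left₀ hppow.le hpa 2)
    exact mul_le_mul_of_nonneg_right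
      (mul_le_mul_of_nonneg_left hinv (by positivity)) (by positivity)
  -- summing up
  have hsum : Nc * ((γ {i0})^2 * (((n:ℝ) ^ α)^2)⁻¹ * Nc⁻¹)
      ≤ ∑ p ∈ Pset n, ∫ Δ in unitBox d, ‖Q d p z Δ f‖ ^ 2 := by
    have := Finset.card_nsmul_le_sum (Pset n)
      (fun p => ∫ Δ in unitBox d, ‖Q d p z Δ f‖ ^ 2)
      ((γ {i0})^2 * (((n:ℝ) ^ α)^2)⁻¹ * Nc⁻¹) hmain
    rwa [nsmul_eq_mul] at this
  have hA : (γ {i0})^2 * (((n:ℝ) ^ α)^2)⁻¹ * Nc⁻¹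
      ≤ (1 / Nc) * ∑ p ∈ Pset n, ∫ Δ in unitBox d, ‖Q d p z Δ f‖ ^ 2 := by
    rw [one_div]
    calc (γ {i0})^2 * (((n:ℝ) ^ α)^2)⁻¹ * Nc⁻¹
        = Nc⁻¹ * (Nc * ((γ {i0})^2 * (((n:ℝ) ^ α)^2)⁻¹ * Nc⁻¹)) := by
          field_simp
      _ ≤ Nc⁻¹ * ∑ p ∈ Pset n, ∫ Δ in unitBox d, ‖Q d p z Δ f‖ ^ 2 := by
          exact mul_le_mul_of_nonneg_left hsum (by positivity)
  -- arithmetic: target lower bound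
  have hpow : (n:ℝ)^(2*α+1) = ((n:ℝ)^α)^2 * n := by
    rw [Real.rpow_add hnpos, Real.rpow_one]
    congr 1
    rw [← Real.rpow_natCast ((n:ℝ)^α) 2, ← Real.rpow_mul hnpos.le]
    norm_num [mul_comm]
  have hkey : Nc * Real.log n ≤ C2 * n := (le_div_iff₀ hlg).1 hPhigh
  have hB : γ {i0} ^ 2 * Real.log n / (C2 * (n : ℝ) ^ (2 * α + 1))
      ≤ (γ {i0})^2 * (((n:ℝ) ^ α)^2)⁻¹ * Nc⁻¹ := by
    rw [hpow, div_le_iff₀ (by positivity)]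
    have heq : (γ {i0})^2 * (((n:ℝ) ^ α)^2)⁻¹ * Nc⁻¹ * (C2 * (((n:ℝ)^α)^2 * n))
        = (γ {i0})^2 * ((C2 * n) / Nc) := by
      field_simp
    rw [heq]
    have : Real.log n ≤ (C2 * n) / Nc := by
      rw [le_div_iff₀ hNpos]
      linarith [hkey]
    calc γ {i0} ^ 2 * Real.log n ≤ γ {i0} ^ 2 * ((C2 * n) / Nc) :=
          mul_le_mul_of_nonneg_left this (by positivity)
      _ = (γ {i0})^2 * ((C2 * n) / Nc) := rfl
  have hfirst : γ {i0} ^ 2 * Real.log n / (C2 * (n : ℝ) ^ (2 * α + 1))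
      ≤ (1 / Nc) * ∑ p ∈ Pset n, ∫ Δ in unitBox d, ‖Q d p z Δ f‖ ^ 2 :=
    le_trans hB hA
  refine ⟨hfirst, ?_⟩
  have hsqrt := Real.sqrt_le_sqrt hfirst
  have hre : Real.sqrt (γ {i0} ^ 2 * Real.log n / (C2 * (n:ℝ)^(2*α+1)))
      = γ {i0} * Real.sqrt (Real.log n) / (Real.sqrt C2 * (n:ℝ)^(α+1/2)) := by
    have hnr : Real.sqrt ((n:ℝ)^(2*α+1)) = (n:ℝ)^(α+1/2) := by
      rw [Real.sqrt_eq_rpow, ← Real.rpow_mul hnpos.le]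
      norm_num
      congr 1
      ring
    rw [Real.sqrt_div (by positivity) _, Real.sqrt_mul (sq_nonneg _), Real.sqrt_sq hγpos.le,
      Real.sqrt_mul hC2.le, hnr]
  exact le_trans (le_of_eq hre.symm) hsqrt
end
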